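/- If M is a nonsingular square-free module and D₁, D₂ are submodules of M with D₁ ∩ D₂ = 0, then Hom(D₁, D₂) = 0. -/

import Mathlib

universe u v w

section Defs

variable {R : Type u} [Ring R]

/-- `N` is an essential submodule of `M`. -/
def EssentialSub {M : Type v} [AddCommGroup M] [Module R M] (N : Submodule R M) : Prop :=
  ∀ K : Submodule R M, K ⊓ N = ⊥ → K = ⊥

/-- `N` is essential in `P` (both submodules of `M`, `N ≤ P`). -/
def EssentialIn {M : Type v} [AddCommGroup M] [Module R M] (N P : Submodule R M) : Prop :=
  N ≤ P ∧ ∀ K : Submodule R M, K ≤ P → K ⊓ N = ⊥ → K = ⊥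

/-- `N` is a closed submodule of `M`: it has no proper essential extension in `M`. -/
def ClosedSub {M : Type v} [AddCommGroup M] [Module R M] (N : Submodule R M) : Prop :=
  ∀ P : Submodule R M, EssentialIn N P → N = P

/-- `i : M →ₗ[R] E` realizes `E` as an injective hull of `M`. -/
structure IsInjectiveHull {M : Type v} {E : Type w} [AddCommGroup M] [Module R M]
    [AddCommGroup E] [Module R E] (i : M →ₗ[R] E) : Prop where
  inj : Function.Injective i
  injE : Module.Injective R E
  ess : EssentialSub (LinearMap.range i)

/-- `M` is invariant under every automorphism of the hull `E` given by `i`. -/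
def HullAutInv {M : Type v} {E : Type w} [AddCommGroup M] [Module R M]
    [AddCommGroup E] [Module R E] (i : M →ₗ[R] E) : Prop :=
  ∀ g : E ≃ₗ[R] E, ∀ m : M, g (i m) ∈ LinearMap.range i

end Defs

/-- `M` is automorphism-invariant: invariant under all automorphisms of its injective hull. -/
def AutInvariant (R : Type u) [Ring R] (M : Type v) [AddCommGroup M] [Module R M] : Prop :=
  ∀ (E : Type v) [AddCommGroup E] [Module R E] (i : M →ₗ[R] E),
    IsInjectiveHull i → HullAutInv i

/-- Every monomorphism from a submodule of `M` into `M` extends to an endomorphism of `M`. -/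
def PseudoInjective (R : Type u) [Ring R] (M : Type v) [AddCommGroup M] [Module R M] : Prop :=
  ∀ (A : Submodule R M) (f : A →ₗ[R] M), Function.Injective f →
    ∃ g : M →ₗ[R] M, ∀ a : A, g a = f a

/-- Every homomorphism from a submodule of `M` into `M` extends to an endomorphism of `M`. -/
def QuasiInjective (R : Type u) [Ring R] (M : Type v) [AddCommGroup M] [Module R M] : Prop :=
  ∀ (A : Submodule R M) (f : A →ₗ[R] M), ∃ g : M →ₗ[R] M, ∀ a : A, g a = f a

/-- `X` is `Y`-injective. -/
def RelInjective (R : Type u) [Ring R] (X : Type v) (Y : Type w) [AddCommGroup X] [Module R X]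
    [AddCommGroup Y] [Module R Y] : Prop :=
  ∀ (A : Submodule R Y) (f : A →ₗ[R] X), ∃ g : Y →ₗ[R] X, ∀ a : A, g a = f a

/-- `M` contains no direct sum of two nonzero isomorphic submodules. -/
def SquareFreeMod (R : Type u) [Ring R] (M : Type v) [AddCommGroup M] [Module R M] : Prop :=
  ∀ (A B : Submodule R M), A ⊓ B = ⊥ → Nonempty (A ≃ₗ[R] B) → A = ⊥

/-- `X` and `Y` have no nonzero isomorphic submodules. -/
def OrthogonalMod (R : Type u) [Ring R] (X : Type v) (Y : Type w) [AddCommGroup X] [Module R X]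
    [AddCommGroup Y] [Module R Y] : Prop :=
  ∀ (A : Submodule R X) (B : Submodule R Y), Nonempty (A ≃ₗ[R] B) → A = ⊥

/-- No nonzero element of `M` is annihilated by an essential (right) ideal of `R`. -/
def NonsingularMod (R : Type u) [Ring R] (M : Type v) [AddCommGroup M] [Module R M] : Prop :=
  ∀ m : M, EssentialSub (LinearMap.ker (LinearMap.toSpanSingleton R M m)) → m = 0

/-!
If `f : D₁ → D₂` had a nonzero submodule `A ≤ D₁` meeting `ker f` trivially, then `A` and
`f A ≤ D₂` would be disjoint isomorphic nonzero submodules of `M`, which square-freeness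
forbids. So `ker f` is essential in `D₁`; then every `f x` is annihilated by the essential
right ideal `{r | r • x ∈ ker f}`, and nonsingularity forces `f x = 0`.
-/

section

variable {R : Type*} [Ring R] {M : Type*} [AddCommGroup M] [Module R M]
  {N : Type*} [AddCommGroup N] [Module R N]

theorem EssentialSub.comap {L : Submodule R M} (hL : EssentialSub L) (g : N →ₗ[R] M) :
    EssentialSub (L.comap g) := by
  intro K hK
  have hmap : K.map g = ⊥ := hL _ <| eq_bot_iff.mpr fun _ ⟨⟨k, hkK, hky⟩, hyL⟩ => by
    subst hky
    have hk : k ∈ K ⊓ L.comap g := ⟨hkK, hyL⟩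
    rw [hK, Submodule.mem_bot] at hk
    simp [hk]
  have hKL : K ≤ L.comap g :=
    (LinearMap.le_ker_iff_map.mpr hmap).trans (LinearMap.ker_le_comap g)
  rwa [inf_eq_left.mpr hKL] at hK

theorem NonsingularMod.eq_zero_of_essentialSub_ker (hns : NonsingularMod R M) (f : N →ₗ[R] M)
    (hf : EssentialSub (LinearMap.ker f)) : f = 0 := by
  ext x
  apply hns
  have hker : LinearMap.ker (LinearMap.toSpanSingleton R M (f x)) =
      (LinearMap.ker f).comap (LinearMap.toSpanSingleton R N x) := by
    rw [← LinearMap.comp_toSpanSingleton, LinearMap.ker_comp]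
  rw [hker]
  exact hf.comap _

theorem SquareFreeMod.subsingleton_of_disjoint_range (hsf : SquareFreeMod R M)
    {φ ψ : N →ₗ[R] M} (hφ : Function.Injective φ) (hψ : Function.Injective ψ)
    (h : LinearMap.range φ ⊓ LinearMap.range ψ = ⊥) : Subsingleton N := by
  have hrange : LinearMap.range φ = ⊥ :=
    hsf _ _ h ⟨(LinearEquiv.ofInjective φ hφ).symm.trans (LinearEquiv.ofInjective ψ hψ)⟩
  rw [LinearMap.range_eq_bot] at hrange
  subst hrange
  exact ⟨fun _ _ => hφ rfl⟩

theorem SquareFreeMod.essentialSub_ker_of_disjoint (hsf : SquareFreeMod R M)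
    {D₁ D₂ : Submodule R M} (h : D₁ ⊓ D₂ = ⊥) (f : D₁ →ₗ[R] D₂) :
    EssentialSub (LinearMap.ker f) := by
  intro A hA
  have hinj : Function.Injective (D₂.subtype ∘ₗ f ∘ₗ A.subtype) := by
    rw [← LinearMap.ker_eq_bot, LinearMap.ker_comp_of_ker_eq_bot _ D₂.ker_subtype,
      LinearMap.ker_comp, ← Submodule.disjoint_iff_comap_eq_bot, disjoint_iff, hA]
  have hdisj : LinearMap.range (D₁.subtype ∘ₗ A.subtype) ⊓
      LinearMap.range (D₂.subtype ∘ₗ f ∘ₗ A.subtype) = ⊥ := by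
    refine eq_bot_iff.mpr (h ▸ inf_le_inf ?_ ?_) <;>
      exact (LinearMap.range_comp_le_range _ _).trans_eq (Submodule.range_subtype _)
  have : Subsingleton A := hsf.subsingleton_of_disjoint_range
    (D₁.injective_subtype.comp A.injective_subtype) hinj hdisj
  exact Submodule.eq_bot_of_subsingleton

end

/-- in a nonsingular square-free module, submodules with zero intersection
admit no nonzero homomorphisms between them. -/
theorem hom_eq_zero_of_disjoint {R : Type u} [Ring R]
    {M : Type v} [AddCommGroup M] [Module R M]
    (hns : NonsingularMod R M) (hsf : SquareFreeMod R M)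
    (D₁ D₂ : Submodule R M) (h : D₁ ⊓ D₂ = ⊥) :
    ∀ f : ↥D₁ →ₗ[R] ↥D₂, f = 0 := by
  intro f
  have hzero : D₂.subtype ∘ₗ f = 0 := hns.eq_zero_of_essentialSub_ker _ <| by
    rw [LinearMap.ker_comp_of_ker_eq_bot _ D₂.ker_subtype]
    exact hsf.essentialSub_ker_of_disjoint h f
  ext x
  exact LinearMap.congr_fun hzero x
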